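/- arXiv:2601.06392 — 3 statements merged into one kernel-verified Lean document; each statement's English description precedes it below -/
import Mathlib

section
/- Let H be a real inner product space and let x, x̃ ∈ H with x ≠ 0. Set ε := ‖x − x̃‖ and ρ := ε / ‖x‖, and assume ρ < 1. Then x̃ ≠ 0, and the normalized vectors x̂ := x/‖x‖ and x̃̂ := x̃/‖x̃‖ satisfy the fidelity lower bound ⟨x̂, x̃̂⟩² ≥ ((1 − ρ)/(1 + ρ))². -/
/-!
Write `ε = ‖x - x̃‖`. Cauchy–Schwarz applied to `⟪x, x - x̃⟫` gives `⟪x, x̃⟫ ≥ ‖x‖ (‖x‖ - ε)`,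
and the triangle inequality gives `‖x̃‖ ≤ ‖x‖ + ε`. Hence the cosine `⟪x, x̃⟫ / (‖x‖ ‖x̃‖)` is at
least `(‖x‖ - ε) / (‖x‖ + ε) = (1 - ρ) / (1 + ρ)`, which is nonnegative, so the bound survives
squaring.
-/

open RealInnerProductSpace

lemma ne_zero_of_norm_sub_lt_norm {E : Type*} [SeminormedAddGroup E] {x y : E}
    (h : ‖x - y‖ < ‖x‖) : y ≠ 0 := by
  rintro rfl
  simp at h

section InnerProductSpace

variable {H : Type*} [NormedAddCommGroup H] [InnerProductSpace ℝ H]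

lemma norm_mul_sub_norm_sub_le_inner (x y : H) : ‖x‖ * (‖x‖ - ‖x - y‖) ≤ ⟪x, y⟫ := by
  have h : ⟪x, x - y⟫ ≤ ‖x‖ * ‖x - y‖ := real_inner_le_norm _ _
  rw [inner_sub_right, real_inner_self_eq_norm_mul_norm] at h
  linarith

lemma inner_inv_norm_smul_inv_norm_smul (x y : H) :
    ⟪‖x‖⁻¹ • x, ‖y‖⁻¹ • y⟫ = ⟪x, y⟫ / (‖x‖ * ‖y‖) := by
  rw [real_inner_smul_left, real_inner_smul_right]
  field_simp

lemma div_le_inner_div_norm_mul_norm {x y : H} (h : ‖x - y‖ < ‖x‖) :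
    (‖x‖ - ‖x - y‖) / (‖x‖ + ‖x - y‖) ≤ ⟪x, y⟫ / (‖x‖ * ‖y‖) := by
  have hy : 0 < ‖y‖ := norm_pos_iff.mpr (ne_zero_of_norm_sub_lt_norm h)
  have hy_le : ‖y‖ ≤ ‖x‖ + ‖x - y‖ := by
    simpa using norm_sub_le x (x - y)
  calc (‖x‖ - ‖x - y‖) / (‖x‖ + ‖x - y‖)
      ≤ (‖x‖ - ‖x - y‖) / ‖y‖ := div_le_div_of_nonneg_left (by linarith) hy hy_le
    _ = ‖x‖ * (‖x‖ - ‖x - y‖) / (‖x‖ * ‖y‖) := by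
      have hx : 0 < ‖x‖ := (norm_nonneg _).trans_lt h
      field_simp
    _ ≤ ⟪x, y⟫ / (‖x‖ * ‖y‖) := by
      gcongr
      exact norm_mul_sub_norm_sub_le_inner x y

end InnerProductSpace

/-- Fidelity lower bound for normalized vectors: if `x ≠ 0` and the relative
approximation error `ρ = ‖x - xt‖ / ‖x‖` satisfies `ρ < 1`, then `xt ≠ 0` and the
squared inner product of the normalized vectors is at least `((1 - ρ)/(1 + ρ))²`. -/
theorem fidelity_bound {H : Type*} [NormedAddCommGroup H] [InnerProductSpace ℝ H]
    (x xt : H) (hx : x ≠ 0) (ε ρ : ℝ) (hε : ε = ‖x - xt‖) (hρ : ρ = ε / ‖x‖)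
    (hρlt : ρ < 1) :
    xt ≠ 0 ∧ ⟪(‖x‖)⁻¹ • x, (‖xt‖)⁻¹ • xt⟫ ^ 2 ≥ ((1 - ρ) / (1 + ρ)) ^ 2 := by
  have hx_pos : 0 < ‖x‖ := norm_pos_iff.mpr hx
  have hε_lt : ‖x - xt‖ < ‖x‖ := by
    rwa [hρ, hε, div_lt_one hx_pos] at hρlt
  have hρ_ratio : (1 - ρ) / (1 + ρ) = (‖x‖ - ε) / (‖x‖ + ε) := by
    rw [hρ]
    field_simp
  refine ⟨ne_zero_of_norm_sub_lt_norm hε_lt, ?_⟩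
  rw [inner_inv_norm_smul_inv_norm_smul, hρ_ratio, hε]
  have hε_nonneg : 0 ≤ ‖x - xt‖ := norm_nonneg _
  exact pow_le_pow_left₀ (div_nonneg (by linarith) (by linarith))
    (div_le_inner_div_norm_mul_norm hε_lt) 2
end

section
/- Let U ≥ 1 be a natural number, E := EuclideanSpace ℝ (Fin U), M a positive integer, and λ ≥ 0. Let ℓ : E → ℝ be Lipschitz with constant L ≥ 0. For each task m = 1, …, M, let (Ω_m, μ_m) be a probability space, α_m ∈ [0, 1], δ_m ≥ 0, and z_m, Δ_m : Ω_m → E measurable with |z_m(ω)ᵢ| ≤ 1 for every coordinate i and every ω, and ‖Δ_m(ω)‖ ≤ δ_m for every ω. Further, let (A, ν) be a probability space and c, c^𝒩, s : A → ℝ measurable with c, c^𝒩 valued in [0, 1], |s| ≤ C_π with C_π ≥ 0, and |c^𝒩(a) − ᾱ c(a)| ≤ ε_c for all a, where ᾱ ∈ [0, 1] and ε_c ≥ 0. Then, setting C_m := L √U, |Σ_{m=1}^{M} (∫ ℓ(α_m • z_m + Δ_m) dμ_m − ∫ ℓ(z_m) dμ_m) + λ (∫ c^𝒩 s dν − ∫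 c s dν)| ≤ Σ_{m=1}^{M} C_m ((1 − α_m) + δ_m) + λ C_π ((1 − ᾱ) + ε_c). -/
open MeasureTheory

/-! The noisy input differs from `z` by `(α - 1) • z + Δ`, of norm at most `(1 - α)√U + δ` since the
coordinates of `z` lie in `[-1, 1]`; the Lipschitz loss turns this into a pointwise bound on the
integrands. On the policy side `|c𝒩 - c| ≤ |c𝒩 - ᾱc| + (1 - ᾱ)c ≤ ε_c + (1 - ᾱ)`, multiplied by
`|s| ≤ C_π`. Integrals against probability measures keep pointwise bounds, and the triangle
inequality combines the tasks and the weighted policy term. -/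

theorem EuclideanSpace.norm_le_sqrt_card_of_abs_le_one {ι : Type*} [Fintype ι]
    {x : EuclideanSpace ℝ ι} (hx : ∀ i, |x i| ≤ 1) : ‖x‖ ≤ √(Fintype.card ι) := by
  rw [EuclideanSpace.norm_eq]
  gcongr
  calc ∑ i, ‖x i‖ ^ 2 ≤ ∑ _i : ι, (1 : ℝ) :=
        Finset.sum_le_sum fun i _ => by
          rw [Real.norm_eq_abs, sq_abs]; exact (sq_le_one_iff_abs_le_one _).2 (hx i)
    _ = Fintype.card ι := by simp

theorem norm_smul_add_sub_le_of_le_one {E : Type*} [SeminormedAddCommGroup E] [NormedSpace ℝ E]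
    {a : ℝ} (ha : a ≤ 1) (x d : E) : ‖a • x + d - x‖ ≤ (1 - a) * ‖x‖ + ‖d‖ :=
  calc ‖a • x + d - x‖ = ‖(1 - a) • (-x) + d‖ := by congr 1; module
    _ ≤ (1 - a) * ‖x‖ + ‖d‖ := by
      refine (norm_add_le _ _).trans ?_
      rw [norm_smul, Real.norm_of_nonneg (sub_nonneg.2 ha), norm_neg]

theorem abs_sub_le_of_abs_sub_mul_le {c cN a ε : ℝ} (hc : c ∈ Set.Icc (0 : ℝ) 1) (ha : a ≤ 1)
    (h : |cN - a * c| ≤ ε) : |cN - c| ≤ (1 - a) + ε := by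
  obtain ⟨hc0, hc1⟩ := hc
  calc |cN - c| ≤ |cN - a * c| + |a * c - c| := abs_sub_le _ _ _
    _ ≤ ε + (1 - a) := by
      gcongr
      rw [abs_sub_comm, show c - a * c = (1 - a) * c by ring,
        abs_of_nonneg (mul_nonneg (sub_nonneg.2 ha) hc0)]
      exact mul_le_of_le_one_right (sub_nonneg.2 ha) hc1
    _ = (1 - a) + ε := add_comm _ _

section Integral

variable {Ω E F : Type*} [MeasurableSpace Ω] {μ : Measure Ω}
  [NormedAddCommGroup E] [NormedAddCommGroup F]

theorem norm_integral_sub_integral_le [NormedSpace ℝ F] [IsProbabilityMeasure μ] {f g : Ω → F}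
    (hf : Integrable f μ) (hg : Integrable g μ) {C : ℝ} (h : ∀ ω, ‖f ω - g ω‖ ≤ C) :
    ‖∫ ω, f ω ∂μ - ∫ ω, g ω ∂μ‖ ≤ C := by
  rw [← integral_sub hf hg]
  simpa using norm_integral_le_of_norm_le_const (μ := μ) (ae_of_all _ h)

theorem LipschitzWith.integrable_comp [IsFiniteMeasure μ] {K : NNReal} {ℓ : E → F}
    (hℓ : LipschitzWith K ℓ) {f : Ω → E} (hf : Integrable f μ) : Integrable (ℓ ∘ f) μ := by
  refine ((integrable_const ‖ℓ 0‖).add (hf.norm.const_mul K)).mono'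
    (hℓ.continuous.comp_aestronglyMeasurable hf.1) (ae_of_all _ fun ω => ?_)
  have hlip := hℓ.norm_sub_le (f ω) 0
  rw [sub_zero] at hlip
  simp only [Function.comp_apply, Pi.add_apply]
  linarith [norm_sub_norm_le (ℓ (f ω)) (ℓ 0)]

theorem abs_integral_comp_smul_add_sub_integral_comp_le [NormedSpace ℝ E] [IsProbabilityMeasure μ]
    {K : NNReal} {ℓ : E → ℝ} (hℓ : LipschitzWith K ℓ) {z Δ : Ω → E}
    (hzm : AEStronglyMeasurable z μ) (hΔm : AEStronglyMeasurable Δ μ) {a R δ : ℝ} (ha : a ≤ 1)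
    (hz : ∀ ω, ‖z ω‖ ≤ R) (hΔ : ∀ ω, ‖Δ ω‖ ≤ δ) :
    |∫ ω, ℓ (a • z ω + Δ ω) ∂μ - ∫ ω, ℓ (z ω) ∂μ| ≤ K * ((1 - a) * R + δ) := by
  have hzi : Integrable z μ := .of_bound hzm R (ae_of_all _ hz)
  have hΔi : Integrable Δ μ := .of_bound hΔm δ (ae_of_all _ hΔ)
  refine norm_integral_sub_integral_le (hℓ.integrable_comp ((hzi.smul a).add hΔi))
    (hℓ.integrable_comp hzi) fun ω => ?_
  calc ‖ℓ (a • z ω + Δ ω) - ℓ (z ω)‖ ≤ K * ‖a • z ω + Δ ω - z ω‖ := hℓ.norm_sub_le _ _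
    _ ≤ K * ((1 - a) * ‖z ω‖ + ‖Δ ω‖) := by gcongr; exact norm_smul_add_sub_le_of_le_one ha _ _
    _ ≤ K * ((1 - a) * R + δ) := by
      have := sub_nonneg.2 ha
      gcongr
      exacts [hz ω, hΔ ω]

theorem abs_integral_mul_sub_integral_mul_le [IsProbabilityMeasure μ] {c cN s : Ω → ℝ}
    (hcm : AEStronglyMeasurable c μ) (hcNm : AEStronglyMeasurable cN μ)
    (hsm : AEStronglyMeasurable s μ) (hc : ∀ ω, c ω ∈ Set.Icc (0 : ℝ) 1)
    (hcN : ∀ ω, cN ω ∈ Set.Icc (0 : ℝ) 1) {C : ℝ} (hs : ∀ ω, |s ω| ≤ C) {a ε : ℝ} (ha : a ≤ 1)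
    (hcontr : ∀ ω, |cN ω - a * c ω| ≤ ε) :
    |∫ ω, cN ω * s ω ∂μ - ∫ ω, c ω * s ω ∂μ| ≤ C * ((1 - a) + ε) := by
  have hsi : Integrable s μ := .of_bound hsm C (ae_of_all _ hs)
  have hmul {f : Ω → ℝ} (hfm : AEStronglyMeasurable f μ) (hf : ∀ ω, f ω ∈ Set.Icc (0 : ℝ) 1) :
      Integrable (fun ω => f ω * s ω) μ :=
    hsi.bdd_mul hfm (c := 1) (ae_of_all _ fun ω => abs_le.2 ⟨by linarith [(hf ω).1], (hf ω).2⟩)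
  refine norm_integral_sub_integral_le (hmul hcNm hcN) (hmul hcm hc) fun ω => ?_
  rw [Real.norm_eq_abs, ← sub_mul, abs_mul, mul_comm]
  exact mul_le_mul (hs ω) (abs_sub_le_of_abs_sub_mul_le (hc ω) ha (hcontr ω)) (abs_nonneg _)
    ((abs_nonneg _).trans (hs ω))

end Integral

theorem objective_level_robustness_general (U : ℕ) (hU : 1 ≤ U) (M : ℕ)
    (lam : ℝ) (hlam : 0 ≤ lam) (L : ℝ) (hL : 0 ≤ L)
    (ℓ : EuclideanSpace ℝ (Fin U) → ℝ)
    (hlip : ∀ x y : EuclideanSpace ℝ (Fin U), |ℓ x - ℓ y| ≤ L * ‖x - y‖)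
    -- per-task data
    {Ω : Fin M → Type*} [∀ m, MeasurableSpace (Ω m)]
    (μ : ∀ m, Measure (Ω m)) [∀ m, IsProbabilityMeasure (μ m)]
    (α : Fin M → ℝ) (hα : ∀ m, α m ∈ Set.Icc (0 : ℝ) 1)
    (δ : Fin M → ℝ) (hδ : ∀ m, 0 ≤ δ m)
    (z Δ : ∀ m, Ω m → EuclideanSpace ℝ (Fin U))
    (hzm : ∀ m, Measurable (z m)) (hΔm : ∀ m, Measurable (Δ m))
    (hz : ∀ m ω i, |z m ω i| ≤ 1) (hΔ : ∀ m ω, ‖Δ m ω‖ ≤ δ m)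
    -- policy side
    {A : Type*} [MeasurableSpace A] (ν : Measure A) [IsProbabilityMeasure ν]
    (c cN s : A → ℝ) (hcm : Measurable c) (hcNm : Measurable cN) (hsm : Measurable s)
    (hc : ∀ a, c a ∈ Set.Icc (0 : ℝ) 1) (hcN : ∀ a, cN a ∈ Set.Icc (0 : ℝ) 1)
    (Cπ : ℝ) (hs : ∀ a, |s a| ≤ Cπ)
    (αbar εc : ℝ) (hαbar : αbar ∈ Set.Icc (0 : ℝ) 1)
    (hcontr : ∀ a, |cN a - αbar * c a| ≤ εc)
    (Cm : Fin M → ℝ) (hCm : ∀ m, Cm m = L * Real.sqrt U) :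
    |(∑ m : Fin M, ((∫ ω, ℓ (α m • z m ω + Δ m ω) ∂μ m) - ∫ ω, ℓ (z m ω) ∂μ m)) +
        lam * ((∫ a, cN a * s a ∂ν) - ∫ a, c a * s a ∂ν)| ≤
      (∑ m : Fin M, Cm m * ((1 - α m) + δ m)) + lam * Cπ * ((1 - αbar) + εc) := by
  have hℓ : LipschitzWith L.toNNReal ℓ :=
    .of_dist_le' fun x y => by rw [Real.dist_eq, dist_eq_norm]; exact hlip x y
  have hsqrt : 1 ≤ √(U : ℝ) := Real.one_le_sqrt.2 (by exact_mod_cast hU)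
  have htask (m : Fin M) :
      |(∫ ω, ℓ (α m • z m ω + Δ m ω) ∂μ m) - ∫ ω, ℓ (z m ω) ∂μ m| ≤ Cm m * ((1 - α m) + δ m) := by
    refine (abs_integral_comp_smul_add_sub_integral_comp_le hℓ (hzm m).aestronglyMeasurable
      (hΔm m).aestronglyMeasurable (hα m).2
      (fun ω => EuclideanSpace.norm_le_sqrt_card_of_abs_le_one (hz m ω)) (hΔ m)).trans ?_
    rw [Real.coe_toNNReal _ hL, hCm, Fintype.card_fin]
    -- `√U ≥ 1` absorbs the bounded remainder `δ m`
    nlinarith [mul_nonneg (mul_nonneg hL (hδ m)) (sub_nonneg.2 hsqrt)]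
  have hpolicy := abs_integral_mul_sub_integral_mul_le hcm.aestronglyMeasurable
    hcNm.aestronglyMeasurable hsm.aestronglyMeasurable hc hcN hs hαbar.2 hcontr (μ := ν)
  calc _ ≤ |∑ m : Fin M, ((∫ ω, ℓ (α m • z m ω + Δ m ω) ∂μ m) - ∫ ω, ℓ (z m ω) ∂μ m)| +
        lam * |(∫ a, cN a * s a ∂ν) - ∫ a, c a * s a ∂ν| :=
        (abs_add_le _ _).trans_eq (by rw [abs_mul, abs_of_nonneg hlam])
    _ ≤ (∑ m : Fin M, Cm m * ((1 - α m) + δ m)) + lam * (Cπ * ((1 - αbar) + εc)) :=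
        add_le_add ((Finset.abs_sum_le_sum_abs _ _).trans (Finset.sum_le_sum fun m _ => htask m))
          (mul_le_mul_of_nonneg_left hpolicy hlam)
    _ = _ := by ring

/-- Objective-level robustness of CL-QAS: combining per-task classifier robustness over
`M` tasks with policy-term robustness, with `C_m = L√U`,
`|ℒ𝒩_cl-qas − ℒ_cl-qas| ≤ Σ_m C_m((1 − α_m) + δ_m) + λ C_π((1 − ᾱ) + ε_c)`. -/
theorem objective_level_robustness (U : ℕ) (hU : 1 ≤ U) (M : ℕ) (hM : 0 < M)
    (lam : ℝ) (hlam : 0 ≤ lam) (L : ℝ) (hL : 0 ≤ L)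
    (ℓ : EuclideanSpace ℝ (Fin U) → ℝ)
    (hlip : ∀ x y : EuclideanSpace ℝ (Fin U), |ℓ x - ℓ y| ≤ L * ‖x - y‖)
    -- per-task data
    {Ω : Fin M → Type*} [∀ m, MeasurableSpace (Ω m)]
    (μ : ∀ m, Measure (Ω m)) [∀ m, IsProbabilityMeasure (μ m)]
    (α : Fin M → ℝ) (hα : ∀ m, α m ∈ Set.Icc (0 : ℝ) 1)
    (δ : Fin M → ℝ) (hδ : ∀ m, 0 ≤ δ m)
    (z Δ : ∀ m, Ω m → EuclideanSpace ℝ (Fin U))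
    (hzm : ∀ m, Measurable (z m)) (hΔm : ∀ m, Measurable (Δ m))
    (hz : ∀ m ω i, |z m ω i| ≤ 1) (hΔ : ∀ m ω, ‖Δ m ω‖ ≤ δ m)
    -- policy side
    {A : Type*} [MeasurableSpace A] (ν : Measure A) [IsProbabilityMeasure ν]
    (c cN s : A → ℝ) (hcm : Measurable c) (hcNm : Measurable cN) (hsm : Measurable s)
    (hc : ∀ a, c a ∈ Set.Icc (0 : ℝ) 1) (hcN : ∀ a, cN a ∈ Set.Icc (0 : ℝ) 1)
    (Cπ : ℝ) (hCπ : 0 ≤ Cπ) (hs : ∀ a, |s a| ≤ Cπ)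
    (αbar εc : ℝ) (hαbar : αbar ∈ Set.Icc (0 : ℝ) 1) (hεc : 0 ≤ εc)
    (hcontr : ∀ a, |cN a - αbar * c a| ≤ εc)
    (Cm : Fin M → ℝ) (hCm : ∀ m, Cm m = L * Real.sqrt U) :
    |(∑ m : Fin M, ((∫ ω, ℓ (α m • z m ω + Δ m ω) ∂μ m) - ∫ ω, ℓ (z m ω) ∂μ m)) +
        lam * ((∫ a, cN a * s a ∂ν) - ∫ a, c a * s a ∂ν)| ≤
      (∑ m : Fin M, Cm m * ((1 - α m) + δ m)) + lam * Cπ * ((1 - αbar) + εc) :=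
  objective_level_robustness_general U hU M lam hlam L hL ℓ hlip μ α hα δ hδ z Δ hzm hΔm hz hΔ ν c
    cN s hcm hcNm hsm hc hcN Cπ hs αbar εc hαbar hcontr Cm hCm
end

section
/- Let A be a real m × n matrix, let H be the fact that AᵀA is symmetric (Hermitian over ℝ), and let μ : Fin n → ℝ denote the eigenvalues of AᵀA. Then for every natural number k there exist a matrix B : Matrix (Fin m) (Fin n) ℝ with rank B ≤ k and a finite set t ⊆ Fin n with card t = n − min k n such that μ(i) ≤ μ(j) for all i ∈ t and j ∉ t, and trace((A − B)ᵀ (A − B)) ≤ Σ_{i ∈ t} μ(i). -/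
/-!
Diagonalise `AᵀA = U diag(μ) Uᵀ` with `U` orthogonal, and let `P = U diag(1_t) Uᵀ` be the
orthogonal projection onto the eigenvectors indexed by a set `t` of `n - min k n` smallest
eigenvalues. Then `B = A (1 - P)` factors through the `min k n` remaining eigenvectors, so
`rank B ≤ k`, while `(A - B)ᵀ (A - B) = P AᵀA P = U diag(1_t μ) Uᵀ` has trace `∑ i ∈ t, μ i`:
the bound holds with equality. A set `t` of the required kind is built greedily, adding one
minimiser of `μ` on the complement at a time.
-/

open Matrix

theorem Finset.exists_card_eq_forall_mem_forall_notMem_le {ι α : Type*} [Fintype ι]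
    [DecidableEq ι] [LinearOrder α] (f : ι → α) {c : ℕ} (hc : c ≤ Fintype.card ι) :
    ∃ t : Finset ι, t.card = c ∧ ∀ i ∈ t, ∀ j ∉ t, f i ≤ f j := by
  induction c with
  | zero => exact ⟨∅, rfl, by simp⟩
  | succ c ih =>
    obtain ⟨t, ht, hle⟩ := ih (by omega)
    have hne : tᶜ.Nonempty := by
      rw [← Finset.card_pos, Finset.card_compl]; omega
    obtain ⟨j₀, hj₀, hmin⟩ := tᶜ.exists_min_image f hne
    rw [Finset.mem_compl] at hj₀
    refine ⟨insert j₀ t, by rw [Finset.card_insert_of_notMem hj₀, ht], ?_⟩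
    intro i hi j hj
    rw [Finset.mem_insert, not_or] at hj
    rcases Finset.mem_insert.mp hi with rfl | hi
    · exact hmin j (Finset.mem_compl.mpr hj.2)
    · exact hle i hi j hj.2

namespace Matrix

variable {n K : Type*} [Fintype n] [DecidableEq n] [CommRing K]

def conjDiagonal (U : Matrix n n K) (d : n → K) : Matrix n n K := U * diagonal d * Uᵀ

variable {U : Matrix n n K}

theorem conjDiagonal_mul_conjDiagonal (hU : Uᵀ * U = 1) (d e : n → K) :
    conjDiagonal U d * conjDiagonal U e = conjDiagonal U (d * e) := by
  simp only [conjDiagonal, Matrix.mul_assoc]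
  rw [← Matrix.mul_assoc Uᵀ U, hU, Matrix.one_mul, ← Matrix.mul_assoc (diagonal d),
    diagonal_mul_diagonal]
  rfl

theorem conjDiagonal_one (hU : Uᵀ * U = 1) : conjDiagonal U 1 = 1 := by
  rw [conjDiagonal, show diagonal (1 : n → K) = 1 from diagonal_one, Matrix.mul_one,
    mul_eq_one_comm.mp hU]

theorem trace_conjDiagonal (hU : Uᵀ * U = 1) (d : n → K) :
    (conjDiagonal U d).trace = ∑ i, d i := by
  rw [conjDiagonal, trace_mul_cycle, hU, Matrix.one_mul, trace_diagonal]

theorem conjDiagonal_add (d e : n → K) :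
    conjDiagonal U d + conjDiagonal U e = conjDiagonal U (d + e) := by
  rw [conjDiagonal, conjDiagonal, conjDiagonal, ← Matrix.add_mul, ← Matrix.mul_add, diagonal_add]
  rfl

theorem transpose_conjDiagonal (d : n → K) :
    (conjDiagonal U d)ᵀ = conjDiagonal U d := by
  rw [conjDiagonal, transpose_mul, transpose_mul, transpose_transpose, diagonal_transpose,
    Matrix.mul_assoc]

theorem rank_conjDiagonal_le {F : Type*} [Field F] [DecidableEq F] (V : Matrix n n F)
    (d : n → F) : (conjDiagonal V d).rank ≤ Fintype.card {i // d i ≠ 0} := by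
  rw [← rank_diagonal]
  exact (rank_mul_le_left _ _).trans (rank_mul_le_right _ _)

section Real

variable {m : Type*} [Fintype m]

theorem IsHermitian.transpose_eigenvectorUnitary_mul_self {M : Matrix n n ℝ}
    (hM : M.IsHermitian) :
    (hM.eigenvectorUnitary : Matrix n n ℝ)ᵀ * hM.eigenvectorUnitary = 1 := by
  rw [← conjTranspose_eq_transpose_of_trivial, ← star_eq_conjTranspose,
    Unitary.coe_star_mul_self]

theorem IsHermitian.eq_conjDiagonal_eigenvalues {M : Matrix n n ℝ} (hM : M.IsHermitian) :
    M = conjDiagonal hM.eigenvectorUnitary hM.eigenvalues := by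
  conv_lhs => rw [hM.spectral_theorem, Unitary.conjStarAlgAut_apply, star_eq_conjTranspose,
    conjTranspose_eq_transpose_of_trivial]
  rfl

theorem exists_rank_le_trace_eq_sum_eigenvalues (A : Matrix m n ℝ) (hH : (Aᵀ * A).IsHermitian)
    (t : Finset n) :
    ∃ B : Matrix m n ℝ, B.rank ≤ tᶜ.card ∧
      ((A - B)ᵀ * (A - B)).trace = ∑ i ∈ t, hH.eigenvalues i := by
  set U : Matrix n n ℝ := ↑hH.eigenvectorUnitary
  have hU : Uᵀ * U = 1 := hH.transpose_eigenvectorUnitary_mul_self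
  set p : n → ℝ := fun i => if i ∈ t then 1 else 0
  set q : n → ℝ := fun i => if i ∈ t then 0 else 1
  have hpq : conjDiagonal U p + conjDiagonal U q = 1 := by
    rw [conjDiagonal_add, ← conjDiagonal_one hU]
    congr 1
    funext i
    by_cases hi : i ∈ t <;> simp [p, q, hi]
  refine ⟨A * conjDiagonal U q, ?_, ?_⟩
  · calc (A * conjDiagonal U q).rank ≤ (conjDiagonal U q).rank := rank_mul_le_right _ _
      _ ≤ Fintype.card {i // q i ≠ 0} := rank_conjDiagonal_le U q
      _ = tᶜ.card := by
        rw [Fintype.card_subtype]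
        congr 1
        ext i
        simp [q]
  · have hAB : A - A * conjDiagonal U q = A * conjDiagonal U p := by
      rw [← sub_eq_zero, sub_sub, ← Matrix.mul_add, add_comm, hpq, Matrix.mul_one, sub_self]
    have hgram : (A * conjDiagonal U p)ᵀ * (A * conjDiagonal U p)
        = conjDiagonal U (p * hH.eigenvalues * p) := by
      rw [transpose_mul, transpose_conjDiagonal, Matrix.mul_assoc, ← Matrix.mul_assoc Aᵀ]
      conv_lhs => rw [hH.eq_conjDiagonal_eigenvalues]
      rw [conjDiagonal_mul_conjDiagonal hU, conjDiagonal_mul_conjDiagonal hU, mul_assoc]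
    rw [hAB, hgram, trace_conjDiagonal hU, ← Finset.univ_inter t, ← Finset.sum_ite_mem]
    refine Finset.sum_congr rfl fun i _ => ?_
    by_cases hi : i ∈ t <;> simp [p, hi]

end Real

end Matrix

/-- Singular-value truncation step of TT-SVD: for a real `m × n` matrix `A` with
`hH : (Aᵀ * A).IsHermitian` and eigenvalues `μ = hH.eigenvalues`, for every `k` there
exist a matrix `B` of rank at most `k` and a set `t` of `n - min k n` indices carrying
the smallest eigenvalues of `AᵀA`, such that
`trace ((A - B)ᵀ * (A - B)) ≤ Σ_{i ∈ t} μ i`. -/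
theorem svd_truncation_error (m n : ℕ) (A : Matrix (Fin m) (Fin n) ℝ)
    (hH : (Aᵀ * A).IsHermitian) :
    ∀ k : ℕ, ∃ (B : Matrix (Fin m) (Fin n) ℝ) (t : Finset (Fin n)),
      B.rank ≤ k ∧ t.card = n - min k n ∧
      (∀ i ∈ t, ∀ j ∉ t, hH.eigenvalues i ≤ hH.eigenvalues j) ∧
      ((A - B)ᵀ * (A - B)).trace ≤ ∑ i ∈ t, hH.eigenvalues i := by
  intro k
  obtain ⟨t, ht, hle⟩ := Finset.exists_card_eq_forall_mem_forall_notMem_le hH.eigenvalues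
    (c := n - min k n) (by simp)
  obtain ⟨B, hB, htrace⟩ := exists_rank_le_trace_eq_sum_eigenvalues A hH t
  refine ⟨B, t, hB.trans ?_, ht, hle, htrace.le⟩
  rw [Finset.card_compl, ht, Fintype.card_fin]
  omega
end
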